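/- If Φ is true, then no state with status UNSAT is reachable from the initial state via the transition rules of basic Incremental Determinization. -/

import Mathlib

/-! Basic framework: variables are `X ⊕ Y` where `X` are the universal and
`Y` the existential variables (this makes `X` and `Y` disjoint by construction). -/

/-- A literal: a variable together with a polarity. -/
abbrev Lit (X Y : Type) := (X ⊕ Y) × Bool

/-- A clause is a finite set of literals. -/
abbrev Clause (X Y : Type) := Finset (Lit X Y)

/-- A (total) assignment to all variables. Assignments "to a set `D` of variables"
are modelled as total assignments; all notions below only inspect the relevant variables. -/
abbrev Assn (X Y : Type) := (X ⊕ Y) → Bool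

/-- An assignment satisfies a literal if it maps its variable to its polarity. -/
def satLit {X Y : Type} (σ : Assn X Y) (l : Lit X Y) : Prop := σ l.1 = l.2

/-- An assignment satisfies a clause if it satisfies at least one of its literals. -/
def satClause {X Y : Type} (σ : Assn X Y) (c : Clause X Y) : Prop := ∃ l ∈ c, satLit σ l

/-- An assignment satisfies a clause set if it satisfies every clause in it. -/
def satCnf {X Y : Type} (σ : Assn X Y) (ψ : Set (Clause X Y)) : Prop := ∀ c ∈ ψ, satClause σ c

/-- The combined assignment `(xa, ya)`. -/
def combine {X Y : Type} (xa : X → Bool) (ya : Y → Bool) : Assn X Y := Sum.elim xa ya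

/-- The restriction of an assignment to the universal variables `X`. -/
def restrX {X Y : Type} (σ : Assn X Y) : X → Bool := fun x => σ (Sum.inl x)

/-- Truth of the 2QBF `∀X.∃Y.φ`: there is a Skolem function `f` such that for every
assignment `xa` to `X` the combined assignment `(xa, f(xa))` satisfies `φ`. -/
def qbfTrue {X Y : Type} (φ : Set (Clause X Y)) : Prop :=
  ∃ f : (X → Bool) → (Y → Bool), ∀ xa : X → Bool, satCnf (combine xa (f xa)) φ

/-- `v` has a unique Skolem function for domain `χ` in `ψ`: for every assignment `xa` to `X`
satisfying `χ` there is exactly one Boolean `b` such that some assignment `ya` to the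
existential variables with `ya v = b` makes `(xa, ya)` satisfy `ψ`. -/
def uniqueSkolem {X Y : Type} (ψ : Set (Clause X Y)) (χ : (X → Bool) → Prop) (v : Y) : Prop :=
  ∀ xa : X → Bool, χ xa →
    ∃! b : Bool, ∃ ya : Y → Bool, ya v = b ∧ satCnf (combine xa ya) ψ

/-- `C|_D`: the clauses of `C` all of whose variables lie in `D`. -/
def restrictC {X Y : Type} (C : Set (Clause X Y)) (D : Set (X ⊕ Y)) : Set (Clause X Y) :=
  {c ∈ C | ∀ l ∈ c, l.1 ∈ D}

/-- Clause `c` has unique consequence `v` relative to `D`: it contains a literal of `v`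
and all its other literals are of variables in `D`. -/
def hasUC {X Y : Type} (c : Clause X Y) (v : Y) (D : Set (X ⊕ Y)) : Prop :=
  (∃ b : Bool, (Sum.inr v, b) ∈ c) ∧ ∀ l ∈ c, l.1 ≠ Sum.inr v → l.1 ∈ D

/-- `U_v`: the clauses of `C` with unique consequence `v` relative to `D`. -/
def UC {X Y : Type} (C : Set (Clause X Y)) (v : Y) (D : Set (X ⊕ Y)) : Set (Clause X Y) :=
  {c ∈ C | hasUC c v D}

/-- `A_(v,b)`: some clause `c` in `U_v` contains the literal `(v, b)` and the assignment
falsifies every literal of `c` other than the literals of `v`. -/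
def Ant {X Y : Type} (C : Set (Clause X Y)) (v : Y) (D : Set (X ⊕ Y)) (b : Bool)
    (σ : Assn X Y) : Prop :=
  ∃ c ∈ UC C v D, (Sum.inr v, b) ∈ c ∧ ∀ l ∈ c, l.1 ≠ Sum.inr v → ¬ satLit σ l

/-- `deterministic(v, C, χ, D)`. -/
def deterministic {X Y : Type} (v : Y) (C : Set (Clause X Y)) (χ : (X → Bool) → Prop)
    (D : Set (X ⊕ Y)) : Prop :=
  ∀ σ : Assn X Y, satCnf σ (restrictC C D) → χ (restrX σ) →
    Ant C v D true σ ∨ Ant C v D false σ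

/-- `unconflicted(v, C, χ, D)`. -/
def unconflicted {X Y : Type} (v : Y) (C : Set (Clause X Y)) (χ : (X → Bool) → Prop)
    (D : Set (X ⊕ Y)) : Prop :=
  ∀ σ : Assn X Y, satCnf σ (restrictC C D) → χ (restrX σ) →
    ¬ (Ant C v D true σ ∧ Ant C v D false σ)

/-- `v` has a unique Skolem function relative to `D` for domain `χ` in `C`: for every
assignment to `D` satisfying `C|_D` whose restriction to `X` satisfies `χ`, there is exactly
one Boolean `b` such that extending the assignment by `v ↦ b` satisfies every clause of `U_v`. -/
def uniqueSkolemRel {X Y : Type} [DecidableEq X] [DecidableEq Y] (v : Y)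
    (C : Set (Clause X Y)) (χ : (X → Bool) → Prop) (D : Set (X ⊕ Y)) : Prop :=
  ∀ σ : Assn X Y, satCnf σ (restrictC C D) → χ (restrX σ) →
    ∃! b : Bool, satCnf (Function.update σ (Sum.inr v) b) (UC C v D)

/-! The state of the Incremental Determinization solver. -/

/-- The solver status. -/
inductive Status (X Y : Type) where
  | ready : Status X Y
  | conflict (L : Clause X Y) (d : Assn X Y) : Status X Y
  | sat : Status X Y
  | unsat : Status X Y

/-- A solver state `(S, C, D, χ, α)`: a status, a stack of clause sets, a stack of sets of
variables, and two predicates on assignments to `X`. -/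
structure IDState (X Y : Type) where
  status : Status X Y
  C : List (Set (Clause X Y))
  D : List (Set (X ⊕ Y))
  chi : (X → Bool) → Prop
  alpha : (X → Bool) → Prop

/-- The union of the elements of a stack of sets. -/
def stackUnion {β : Type} (S : List (Set β)) : Set β := {x | ∃ s ∈ S, x ∈ s}

/-- The first element (index 0) of a stack of sets. -/
def first {β : Type} (S : List (Set β)) : Set β := S.getD 0 ∅

/-- Add an element to the last set of a stack. -/
def addLast {β : Type} : List (Set β) → β → List (Set β)
  | [], v => [{v}]
  | [s], v => [insert v s]
  | s :: t :: rest, v => s :: addLast (t :: rest) v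

/-- Add an element to the first set of a stack. -/
def addFirst {β : Type} : List (Set β) → β → List (Set β)
  | [], x => [{x}]
  | s :: rest, x => insert x s :: rest

/-- The initial state `(Ready, ⟨φ⟩, ⟨X⟩, ⊤, ⊤)`. -/
def initState {X Y : Type} (φ : Set (Clause X Y)) : IDState X Y :=
  ⟨Status.ready, [φ], [Set.range Sum.inl], fun _ => True, fun _ => True⟩

/-- The transition rules of basic Incremental Determinization. -/
inductive Step {X Y : Type} [DecidableEq X] [DecidableEq Y] :
    IDState X Y → IDState X Y → Prop

  | propagate (C : List (Set (Clause X Y))) (D : List (Set (X ⊕ Y)))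
      (χ α : (X → Bool) → Prop) (v : Y)
      (hv : Sum.inr v ∉ stackUnion D)
      (hdet : deterministic v (stackUnion C) (fun xa => χ xa ∧ α xa) (stackUnion D))
      (hunc : unconflicted v (stackUnion C) (fun xa => χ xa ∧ α xa) (stackUnion D)) :
      Step ⟨Status.ready, C, D, χ, α⟩ ⟨Status.ready, C, addLast D (Sum.inr v), χ, α⟩
  | decide (C : List (Set (Clause X Y))) (D : List (Set (X ⊕ Y)))
      (χ α : (X → Bool) → Prop) (v : Y) (δ : Set (Clause X Y))
      (hv : Sum.inr v ∉ stackUnion D) (hδfin : δ.Finite)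
      (hδ : ∀ c ∈ δ, hasUC c v (stackUnion D)) :
      Step ⟨Status.ready, C, D, χ, α⟩ ⟨Status.ready, C ++ [δ], D ++ [∅], χ, α⟩
  | sat (C : List (Set (Clause X Y))) (D : List (Set (X ⊕ Y)))
      (χ : (X → Bool) → Prop)
      (hD : stackUnion D = Set.univ) :
      Step ⟨Status.ready, C, D, χ, fun _ => True⟩ ⟨Status.sat, C, D, χ, fun _ => True⟩
  | conflict (C : List (Set (Clause X Y))) (D : List (Set (X ⊕ Y)))
      (χ α : (X → Bool) → Prop) (v : Y) (σ : Assn X Y)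
      (hv : Sum.inr v ∉ stackUnion D)
      (hsat : satCnf σ (restrictC (stackUnion C) (stackUnion D)))
      (hχ : χ (restrX σ)) (hα : α (restrX σ))
      (ht : Ant (stackUnion C) v (stackUnion D) true σ)
      (hf : Ant (stackUnion C) v (stackUnion D) false σ) :
      Step ⟨Status.ready, C, D, χ, α⟩
        ⟨Status.conflict {(Sum.inr v, true), (Sum.inr v, false)} σ, C, D, χ, α⟩
  | analyze (C : List (Set (Clause X Y))) (D : List (Set (X ⊕ Y)))
      (χ α : (X → Bool) → Prop) (L : Clause X Y) (σ : Assn X Y)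
      (c : Clause X Y) (l : Lit X Y)
      (hc : c ∈ first C) (hl : l ∈ L) (hlc : (l.1, !l.2) ∈ c) :
      Step ⟨Status.conflict L σ, C, D, χ, α⟩
        ⟨Status.conflict (L.erase l ∪ c.erase (l.1, !l.2)) σ, C, D, χ, α⟩
  | learn (C : List (Set (Clause X Y))) (D : List (Set (X ⊕ Y)))
      (χ α : (X → Bool) → Prop) (L : Clause X Y) (σ : Assn X Y)
      (h : ∃ l ∈ L, l.1 ∉ stackUnion D) :
      Step ⟨Status.conflict L σ, C, D, χ, α⟩ ⟨Status.ready, addFirst C L, D, χ, α⟩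
  | unsat (C : List (Set (Clause X Y))) (D : List (Set (X ⊕ Y)))
      (χ α : (X → Bool) → Prop) (L : Clause X Y) (σ : Assn X Y)
      (hvars : ∀ l ∈ L, l.1 ∈ first D)
      (hfals : ∀ l ∈ L, ¬ satLit σ l) :
      Step ⟨Status.conflict L σ, C, D, χ, α⟩ ⟨Status.unsat, C, D, χ, α⟩
  | backtrack (S : Status X Y) (C : List (Set (Clause X Y))) (D : List (Set (X ⊕ Y)))
      (χ α : (X → Bool) → Prop) (k : ℕ) (h0 : 0 < k) (hk : k ≤ C.length) :
      Step ⟨S, C, D, χ, α⟩ ⟨S, C.take k, D.take k, χ, α⟩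

/-- Reachability from the initial state via the basic ID rules. -/
def Reachable {X Y : Type} [DecidableEq X] [DecidableEq Y] (φ : Set (Clause X Y))
    (s : IDState X Y) : Prop :=
  Relation.ReflTransGen Step (initState φ) s

/-!
The bottom level of the stacks only ever holds sound information. Every clause of `C(0)` is a
consequence of `φ` (learnt clauses arise by resolution from clauses of `C(0)`, starting from the
tautology `v ∨ ¬v`), and every assignment satisfying `C(0)|_{D(0)}` agrees on `D(0)` with each
model of `φ` that has the same universal part. Propagate extends `D(0)` only while the stacks have
height one; then the clause of `U_v` that fixes `v` is itself a consequence of `φ`, so it fixes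
`v` in those models as well. An Unsat step would need a conflict clause over `D(0)` falsified by
an assignment `d̄` satisfying `C(0)|_{D(0)}`; but the model `(x̄, f(x̄))` given by a Skolem
function satisfies that clause and agrees with `d̄` on `D(0)`.
-/

section Stack

variable {β : Type}

theorem first_subset_stackUnion (S : List (Set β)) : first S ⊆ stackUnion S := by
  cases S with
  | nil => exact Set.empty_subset _
  | cons s _ => exact fun x hx => ⟨s, List.mem_cons_self, hx⟩

theorem stackUnion_singleton (s : Set β) : stackUnion [s] = s := by
  ext x
  simp [stackUnion]

theorem first_append {S : List (Set β)} (hS : S ≠ []) (T : List (Set β)) :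
    first (S ++ T) = first S := by
  obtain ⟨s, S, rfl⟩ := List.exists_cons_of_ne_nil hS
  rfl

theorem first_take {k : ℕ} (hk : 0 < k) (S : List (Set β)) : first (S.take k) = first S := by
  obtain ⟨k, rfl⟩ := Nat.exists_eq_add_one_of_ne_zero hk.ne'
  cases S <;> rfl

theorem first_addFirst (S : List (Set β)) (x : β) :
    first (addFirst S x) = insert x (first S) := by
  cases S with
  | nil => exact (insert_empty_eq x).symm
  | cons s S => rfl

theorem length_addFirst {S : List (Set β)} (hS : S ≠ []) (x : β) :
    (addFirst S x).length = S.length := by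
  obtain ⟨s, S, rfl⟩ := List.exists_cons_of_ne_nil hS
  rfl

theorem length_addLast {S : List (Set β)} (hS : S ≠ []) (x : β) :
    (addLast S x).length = S.length := by
  induction S with
  | nil => exact absurd rfl hS
  | cons s S ih =>
    cases S with
    | nil => rfl
    | cons t S => simp [addLast, ih]

theorem addLast_ne_nil (S : List (Set β)) (x : β) : addLast S x ≠ [] := by
  match S with
  | [] | [_] | _ :: _ :: _ => simp [addLast]

end Stack

section Solver

variable {X Y : Type}

theorem satCnf_mono {σ : Assn X Y} {ψ ψ' : Set (Clause X Y)} (h : ψ ⊆ ψ')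
    (hσ : satCnf σ ψ') : satCnf σ ψ :=
  fun c hc => hσ c (h hc)

theorem restrictC_mono {C C' : Set (Clause X Y)} {D D' : Set (X ⊕ Y)}
    (hC : C ⊆ C') (hD : D ⊆ D') : restrictC C D ⊆ restrictC C' D' :=
  fun _ ⟨hc, hcD⟩ => ⟨hC hc, fun l hl => hD (hcD l hl)⟩

theorem satClause_pair [DecidableEq X] [DecidableEq Y] (τ : Assn X Y) (w : X ⊕ Y) :
    satClause τ {(w, true), (w, false)} := by
  cases h : τ w
  · exact ⟨(w, false), by simp, h⟩
  · exact ⟨(w, true), by simp, h⟩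

theorem satClause_resolve [DecidableEq X] [DecidableEq Y] {τ : Assn X Y} {L c : Clause X Y}
    (l : Lit X Y) (hL : satClause τ L) (hc : satClause τ c) :
    satClause τ (L.erase l ∪ c.erase (l.1, !l.2)) := by
  obtain ⟨l', hl', hτl'⟩ := hL
  by_cases h : l' = l
  · subst h
    obtain ⟨l'', hl'', hτl''⟩ := hc
    refine ⟨l'', Finset.mem_union_right _ (Finset.mem_erase.2 ⟨?_, hl''⟩), hτl''⟩
    rintro rfl
    simp only [satLit] at hτl' hτl''
    simp [hτl'] at hτl''
  · exact ⟨l', Finset.mem_union_left _ (Finset.mem_erase.2 ⟨h, hl'⟩), hτl'⟩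

def Entails (φ : Set (Clause X Y)) (c : Clause X Y) : Prop :=
  ∀ τ : Assn X Y, satCnf τ φ → satClause τ c

theorem Entails.resolve [DecidableEq X] [DecidableEq Y] {φ : Set (Clause X Y)}
    {L c : Clause X Y} (l : Lit X Y) (hL : Entails φ L) (hc : Entails φ c) :
    Entails φ (L.erase l ∪ c.erase (l.1, !l.2)) :=
  fun τ hτ => satClause_resolve l (hL τ hτ) (hc τ hτ)

section Propagation

variable {C : Set (Clause X Y)} {D : Set (X ⊕ Y)} {v : Y} {σ : Assn X Y}

theorem exists_forcing_clause {χ : (X → Bool) → Prop} (hdet : deterministic v C χ D)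
    (hunc : unconflicted v C χ D) (hσ : satCnf σ (restrictC C D)) (hχ : χ (restrX σ)) :
    ∃ b, ∃ c ∈ UC C v D, (Sum.inr v, b) ∈ c ∧ (Sum.inr v, !b) ∉ c ∧
      ∀ l ∈ c, l.1 ≠ Sum.inr v → ¬ satLit σ l := by
  have hboth := hunc σ hσ hχ
  rcases hdet σ hσ hχ with ⟨c, hc, hb, hfal⟩ | ⟨c, hc, hb, hfal⟩
  · exact ⟨true, c, hc, hb, fun h => hboth ⟨⟨c, hc, hb, hfal⟩, c, hc, h, hfal⟩, hfal⟩
  · exact ⟨false, c, hc, hb, fun h => hboth ⟨⟨c, hc, h, hfal⟩, c, hc, hb, hfal⟩, hfal⟩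

theorem apply_eq_of_satClause {c : Clause X Y} {b : Bool} {ρ : Assn X Y}
    (hcD : ∀ l ∈ c, l.1 ≠ Sum.inr v → l.1 ∈ D) (hnb : (Sum.inr v, !b) ∉ c)
    (hfal : ∀ l ∈ c, l.1 ≠ Sum.inr v → ¬ satLit σ l) (hagree : ∀ w ∈ D, ρ w = σ w)
    (hρ : satClause ρ c) : ρ (Sum.inr v) = b := by
  obtain ⟨⟨w, b'⟩, hl, hρl⟩ := hρ
  by_cases hw : w = Sum.inr v
  · subst hw
    by_contra hne
    have hb' : b' = !b := by cases b <;> cases b' <;> simp_all [satLit]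
    exact hnb (hb' ▸ hl)
  · exact absurd ((hagree w (hcD _ hl hw)).symm.trans hρl) (hfal _ hl hw)

end Propagation

def Determines (φ C : Set (Clause X Y)) (D : Set (X ⊕ Y)) : Prop :=
  ∀ σ τ : Assn X Y, satCnf σ (restrictC C D) → satCnf τ φ → restrX τ = restrX σ →
    ∀ w ∈ D, τ w = σ w

section Determines

variable {φ C : Set (Clause X Y)} {D : Set (X ⊕ Y)}

theorem determines_universal (φ C : Set (Clause X Y)) : Determines φ C (Set.range Sum.inl) := by
  rintro σ τ - - hX _ ⟨x, rfl⟩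
  exact congrFun hX x

theorem Determines.mono {C' : Set (Clause X Y)} (h : Determines φ C D) (hC : C ⊆ C') :
    Determines φ C' D :=
  fun σ τ hσ => h σ τ (satCnf_mono (restrictC_mono hC subset_rfl) hσ)

theorem Determines.propagate {v : Y} {χ : (X → Bool) → Prop} (h : Determines φ C D)
    (hC : ∀ c ∈ C, Entails φ c) (hχ : ∀ xa, χ xa)
    (hdet : deterministic v C χ D) (hunc : unconflicted v C χ D) :
    Determines φ C (insert (Sum.inr v) D) := by
  intro σ τ hσ hτ hX w hw
  have hσD : satCnf σ (restrictC C D) :=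
    satCnf_mono (restrictC_mono subset_rfl (Set.subset_insert _ _)) hσ
  have hagree := h σ τ hσD hτ hX
  rcases hw with rfl | hw
  · obtain ⟨b, c, ⟨hcC, -, hcD⟩, -, hnb, hfal⟩ :=
      exists_forcing_clause hdet hunc hσD (hχ _)
    have hcR : c ∈ restrictC C (insert (Sum.inr v) D) := by
      refine ⟨hcC, fun l hl => ?_⟩
      by_cases hlv : l.1 = Sum.inr v
      · exact Or.inl hlv
      · exact Or.inr (hcD l hl hlv)
    rw [apply_eq_of_satClause hcD hnb hfal hagree (hC c hcC τ hτ),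
      apply_eq_of_satClause hcD hnb hfal (fun _ _ => rfl) (hσ c hcR)]
  · exact hagree w hw

theorem Determines.satClause (htrue : qbfTrue φ) (h : Determines φ C D) {L : Clause X Y}
    (hL : Entails φ L) (hLD : ∀ l ∈ L, l.1 ∈ D) {σ : Assn X Y}
    (hσ : satCnf σ (restrictC C D)) : satClause σ L := by
  obtain ⟨f, hf⟩ := htrue
  have hagree := h σ _ hσ (hf (restrX σ)) rfl
  obtain ⟨l, hl, hτl⟩ := hL _ (hf (restrX σ))
  exact ⟨l, hl, (hagree l.1 (hLD l hl)).symm.trans hτl⟩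

end Determines

variable {φ : Set (Clause X Y)}

theorem Determines.first_addLast {C : List (Set (Clause X Y))} {D : List (Set (X ⊕ Y))}
    {v : Y} {χ : (X → Bool) → Prop} (hlen : C.length = D.length) (hD : D ≠ [])
    (hC : ∀ c ∈ first C, Entails φ c) (h : Determines φ (first C) (first D))
    (hχ : ∀ xa, χ xa) (hdet : deterministic v (stackUnion C) χ (stackUnion D))
    (hunc : unconflicted v (stackUnion C) χ (stackUnion D)) :
    Determines φ (first C) (first (addLast D (Sum.inr v))) :=
  match D, hD with
  | _ :: _ :: _, _ => h
  | [d], _ => by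
    obtain ⟨c, rfl⟩ := List.length_eq_one_iff.1 hlen
    rw [stackUnion_singleton, stackUnion_singleton] at hdet hunc
    exact h.propagate hC hχ hdet hunc

def StatusSound (φ C : Set (Clause X Y)) (D : Set (X ⊕ Y)) : Status X Y → Prop
  | .conflict L d => Entails φ L ∧ satCnf d (restrictC C D)
  | .unsat => False
  | _ => True

structure IDInvariant (φ : Set (Clause X Y)) (s : IDState X Y) : Prop where
  domain_top : ∀ xa, s.chi xa ∧ s.alpha xa
  length_eq : s.C.length = s.D.length
  D_ne_nil : s.D ≠ []
  entails : ∀ c ∈ first s.C, Entails φ c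
  determines : Determines φ (first s.C) (first s.D)
  statusSound : StatusSound φ (first s.C) (first s.D) s.status

theorem idInvariant_initState (φ : Set (Clause X Y)) : IDInvariant φ (initState φ) where
  domain_top _ := ⟨trivial, trivial⟩
  length_eq := rfl
  D_ne_nil := List.cons_ne_nil _ _
  entails _ hc _ hτ := hτ _ hc
  determines := determines_universal φ φ
  statusSound := trivial

theorem IDInvariant.C_ne_nil {s : IDState X Y} (hs : IDInvariant φ s) : s.C ≠ [] :=
  List.ne_nil_of_length_pos (hs.length_eq ▸ List.length_pos_of_ne_nil hs.D_ne_nil)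

theorem IDInvariant.step [DecidableEq X] [DecidableEq Y] (htrue : qbfTrue φ)
    {s t : IDState X Y} (hs : IDInvariant φ s) (hst : Step s t) : IDInvariant φ t := by
  have hC := hs.C_ne_nil
  obtain ⟨htop, hlen, hD, hent, hdetm, hsound⟩ := hs
  cases hst with
  | propagate C D _ _ _ _ hdet hunc =>
    exact ⟨htop, hlen.trans (length_addLast hD _).symm, addLast_ne_nil _ _, hent,
      Determines.first_addLast hlen hD hent hdetm htop hdet hunc, trivial⟩
  | decide C D _ _ _ δ =>
    have hfirstC : first (C ++ [δ]) = first C := first_append hC _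
    have hfirstD : first (D ++ [∅]) = first D := first_append hD _
    refine ⟨htop, by simp [hlen], by simp, ?_, ?_, trivial⟩
    · rw [hfirstC]; exact hent
    · rw [hfirstC, hfirstD]; exact hdetm
  | sat => exact ⟨htop, hlen, hD, hent, hdetm, trivial⟩
  | conflict C D _ _ _ _ _ hσ =>
    refine ⟨htop, hlen, hD, hent, hdetm, fun τ _ => satClause_pair τ _, ?_⟩
    exact satCnf_mono (restrictC_mono (first_subset_stackUnion C) (first_subset_stackUnion D)) hσ
  | analyze _ _ _ _ _ _ c l hc =>
    exact ⟨htop, hlen, hD, hent, hdetm, hsound.1.resolve l (hent c hc), hsound.2⟩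
  | learn C _ _ _ L =>
    have hfirst : first (addFirst C L) = insert L (first C) := first_addFirst C L
    refine ⟨htop, (length_addFirst hC L).trans hlen, hD, ?_, ?_, trivial⟩
    · rw [hfirst]
      rintro c (rfl | hc)
      exacts [hsound.1, hent c hc]
    · rw [hfirst]
      exact hdetm.mono (Set.subset_insert _ _)
  | unsat _ _ _ _ _ _ hvars hfals =>
    obtain ⟨l, hl, hσl⟩ := hdetm.satClause htrue hsound.1 hvars hsound.2
    exact absurd hσl (hfals l hl)
  | backtrack _ C D _ _ k hk =>
    have hD' : D.take k ≠ [] := by simp [Nat.pos_iff_ne_zero.mp hk, hD]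
    refine ⟨htop, by simp [hlen], hD', ?_, ?_, ?_⟩ <;> simp only [first_take hk]
    exacts [hent, hdetm, hsound]

theorem IDInvariant.of_reachable [DecidableEq X] [DecidableEq Y] (htrue : qbfTrue φ)
    {s : IDState X Y} (h : Reachable φ s) : IDInvariant φ s := by
  induction h with
  | refl => exact idInvariant_initState φ
  | tail _ hst ih => exact ih.step htrue hst

end Solver

theorem stmt_6_general {X Y : Type} [DecidableEq X] [DecidableEq Y]
    (φ : Set (Clause X Y))
    (htrue : qbfTrue φ) :
    ¬ ∃ s : IDState X Y, Reachable φ s ∧ s.status = Status.unsat := by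
  rintro ⟨s, hreach, hunsat⟩
  have hsound := (IDInvariant.of_reachable htrue hreach).statusSound
  rw [hunsat] at hsound
  exact hsound

/-- If Φ is true, no state with status UNSAT is reachable via basic ID. -/
theorem stmt_6 {X Y : Type} [Fintype X] [Fintype Y] [DecidableEq X] [DecidableEq Y]
    (φ : Set (Clause X Y)) (hφfin : φ.Finite)
    (hφY : ∀ c ∈ φ, ∃ l ∈ c, ∃ y : Y, l.1 = Sum.inr y)
    (htrue : qbfTrue φ) :
    ¬ ∃ s : IDState X Y, Reachable φ s ∧ s.status = Status.unsat :=
  stmt_6_general φ htrue
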